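/- arXiv:2002.01044 — 2 statements merged into one kernel-verified Lean document; each statement's English description precedes it below -/
import Mathlib

section
/- Theorem (minimal average volume, main result): Let 0 < δ < 1. Let C* be a minimal-volume confidence region and let C be any confidence region at level 1−δ, with all sets C*(p̂) and C(p̂) μ-measurable. Then Σ_{p̂ ∈ Δ_{k,n}} μ(C*(p̂)) ≤ Σ_{p̂ ∈ Δ_{k,n}} μ(C(p̂)). -/
open MeasureTheory Finset
open scoped ENNReal Classical

noncomputable section

/-- The discrete simplex of empirical count vectors from `n` samples over `k` categories. -/
def discSimplex (k n : ℕ) : Finset (Fin k → ℕ) :=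
  (Fintype.piFinset fun _ : Fin k => Finset.range (n + 1)).filter fun c => ∑ i, c i = n

/-- The probability simplex `Δ_k ⊆ ℝ^k`. -/
def probSimplex (k : ℕ) : Set (EuclideanSpace ℝ (Fin k)) :=
  {p | (∀ i, 0 ≤ p i) ∧ ∑ i, p i = 1}

/-- Multinomial probability of observing the empirical count vector `c` under parameter `p`. -/
def multProb (k : ℕ) (p : EuclideanSpace ℝ (Fin k)) (c : Fin k → ℕ) : ℝ :=
  (Nat.multinomial Finset.univ c : ℝ) * ∏ i, p i ^ c i

/-- Probability of a set of empirical count vectors under parameter `p`. -/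
def Pmass (k : ℕ) (p : EuclideanSpace ℝ (Fin k)) (S : Finset (Fin k → ℕ)) : ℝ :=
  ∑ c ∈ S, multProb k p c

/-- The `(k-1)`-dimensional Lebesgue (surface) measure on `Δ_k ⊆ ℝ^k`, realized as the
`(k-1)`-dimensional Hausdorff measure on Euclidean space. -/
def surfMeasure (k : ℕ) : Measure (EuclideanSpace ℝ (Fin k)) :=
  Measure.hausdorffMeasure ((k : ℝ) - 1)

lemma discSimplex_eq_piAntidiag (k n : ℕ) :
    discSimplex k n = Finset.piAntidiag (Finset.univ : Finset (Fin k)) n := by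
  ext c
  simp only [discSimplex, Finset.mem_filter, Fintype.mem_piFinset, Finset.mem_range,
    Finset.mem_piAntidiag, Finset.mem_univ, implies_true, and_true]
  constructor
  · rintro ⟨-, h⟩; exact h
  · intro h
    refine ⟨fun i => ?_, h⟩
    have : c i ≤ ∑ j, c j := Finset.single_le_sum (f := c) (fun _ _ => Nat.zero_le _)
      (Finset.mem_univ i)
    exact Nat.lt_succ_of_le (h ▸ this)

lemma Pmass_discSimplex (k n : ℕ) (p : EuclideanSpace ℝ (Fin k))
    (hp : p ∈ probSimplex k) : Pmass k p (discSimplex k n) = 1 := by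
  have := Finset.sum_pow_eq_sum_piAntidiag (Finset.univ : Finset (Fin k)) (fun i => p i) n
  rw [hp.2, one_pow] at this
  rw [Pmass, discSimplex_eq_piAntidiag]
  simp only [multProb]
  exact this.symm

/-- Main theorem: minimal average volume.  If `C*` is a minimal-volume confidence region, built
from covering collections `S*(p)` of minimum cardinality among subsets of `Δ_{k,n}` with
`P_p`-mass at least `1-δ` via `C*(p̂) = {p ∈ Δ_k : p̂ ∈ S*(p)}`, and `C` is any confidence region
at level `1-δ`, then the total volume of the regions `C*` is at most that of `C`. -/
theorem minimal_average_volume (k n : ℕ) (hk : 2 ≤ k) (hn : 1 ≤ n)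
    (δ : ℝ) (hδ0 : 0 < δ) (hδ1 : δ < 1)
    -- the covering collections `S*(p)` defining the minimal-volume region
    (Sstar : EuclideanSpace ℝ (Fin k) → Finset (Fin k → ℕ))
    (hSsub : ∀ p ∈ probSimplex k, Sstar p ⊆ discSimplex k n)
    (hSmass : ∀ p ∈ probSimplex k, 1 - δ ≤ Pmass k p (Sstar p))
    (hSmin : ∀ p ∈ probSimplex k, ∀ T ⊆ discSimplex k n,
      1 - δ ≤ Pmass k p T → (Sstar p).card ≤ T.card)
    -- an arbitrary confidence region `C` at level `1-δ`
    (C : (Fin k → ℕ) → Set (EuclideanSpace ℝ (Fin k)))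
    (hCsub : ∀ c ∈ discSimplex k n, C c ⊆ probSimplex k)
    (hCconf : ∀ p ∈ probSimplex k,
      Pmass k p ((discSimplex k n).filter fun c => p ∉ C c) ≤ δ)
    -- measurability of all the regions involved
    (hCstarMeas : ∀ c ∈ discSimplex k n,
      MeasurableSet {p : EuclideanSpace ℝ (Fin k) | p ∈ probSimplex k ∧ c ∈ Sstar p})
    (hCmeas : ∀ c ∈ discSimplex k n, MeasurableSet (C c)) :
    ∑ c ∈ discSimplex k n,
        surfMeasure k {p : EuclideanSpace ℝ (Fin k) | p ∈ probSimplex k ∧ c ∈ Sstar p}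
      ≤ ∑ c ∈ discSimplex k n, surfMeasure k (C c) := by

  classical
  set A : (Fin k → ℕ) → Set (EuclideanSpace ℝ (Fin k)) :=
    fun c => {p : EuclideanSpace ℝ (Fin k) | p ∈ probSimplex k ∧ c ∈ Sstar p} with hA
  -- rewrite both sides as lintegrals of indicator sums
  have hrewL : ∀ (D : (Fin k → ℕ) → Set (EuclideanSpace ℝ (Fin k)))
      (hD : ∀ c ∈ discSimplex k n, MeasurableSet (D c)),
      ∑ c ∈ discSimplex k n, surfMeasure k (D c)
        = ∫⁻ p, ∑ c ∈ discSimplex k n, (D c).indicator (1 : EuclideanSpace ℝ (Fin k) → ℝ≥0∞) p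
            ∂(surfMeasure k) := by
    intro D hD
    rw [lintegral_finset_sum _ (fun c hc => (measurable_one.indicator (hD c hc)))]
    exact Finset.sum_congr rfl fun c hc => (lintegral_indicator_one (hD c hc)).symm
  rw [hrewL A hCstarMeas, hrewL C hCmeas]
  refine lintegral_mono fun p => ?_
  by_cases hp : p ∈ probSimplex k
  · -- both sides are cardinalities
    have hL : ∑ c ∈ discSimplex k n, (A c).indicator (1 : EuclideanSpace ℝ (Fin k) → ℝ≥0∞) p
        = ((Sstar p).card : ℝ≥0∞) := by
      have : ∀ c, (A c).indicator (1 : EuclideanSpace ℝ (Fin k) → ℝ≥0∞) p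
          = if c ∈ Sstar p then 1 else 0 := by
        intro c
        by_cases hc : c ∈ Sstar p
        · simp [hA, Set.indicator_of_mem, hp, hc]
        · simp [hA, Set.indicator_of_notMem, hp, hc]
      simp_rw [this]
      rw [Finset.sum_boole]
      congr 2
      rw [Finset.filter_mem_eq_inter, Finset.inter_eq_right.2 (hSsub p hp)]
    have hR : ∑ c ∈ discSimplex k n, (C c).indicator (1 : EuclideanSpace ℝ (Fin k) → ℝ≥0∞) p
        = (((discSimplex k n).filter fun c => p ∈ C c).card : ℝ≥0∞) := by
      have : ∀ c, (C c).indicator (1 : EuclideanSpace ℝ (Fin k) → ℝ≥0∞) p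
          = if p ∈ C c then 1 else 0 := by
        intro c; by_cases hc : p ∈ C c <;> simp [hc]
      simp_rw [this]
      rw [Finset.sum_boole]
    rw [hL, hR]
    have hmass : 1 - δ ≤ Pmass k p ((discSimplex k n).filter fun c => p ∈ C c) := by
      have hsplit : Pmass k p ((discSimplex k n).filter fun c => p ∈ C c)
          + Pmass k p ((discSimplex k n).filter fun c => ¬ p ∈ C c)
          = Pmass k p (discSimplex k n) := by
        simpa [Pmass] using
          Finset.sum_filter_add_sum_filter_not (discSimplex k n)
            (fun c => p ∈ C c) (multProb k p)
      have h1 := Pmass_discSimplex k n p hp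
      have h2 := hCconf p hp
      linarith
    have hcard := hSmin p hp _ (Finset.filter_subset _ _) hmass
    exact Nat.mono_cast hcard
  · -- LHS is zero
    have : ∀ c, (A c).indicator (1 : EuclideanSpace ℝ (Fin k) → ℝ≥0∞) p = 0 := by
      intro c
      apply Set.indicator_of_notMem
      simp only [hA, Set.mem_setOf_eq]
      exact fun h => hp h.1
    simp [this]
end
end

section
/- Proposition (maximal coverage among minimal-volume regions): fix 0 < δ < 1 and p ∈ Δ_k. Let p̂_1, p̂_2, … be an ordering of Δ_{k,n} with P_p(p̂_1) ≥ P_p(p̂_2) ≥ ⋯, let ℓ be the smallest integer with Σ_{i=1}^{ℓ} P_p(p̂_i) ≥ 1−δ, set S**(p) = {p̂_1, …, p̂_ℓ}, and define C**(p̂) := {p ∈ Δ_k : p̂ ∈ S**(p)}. Let C* be any minimal-volume confidence region built from covering collections S*(p) of minimum cardinality among sets with P_p-mass at least 1−δ. Then for all p ∈ Δ_k: P_p({p̂ : p ∈ C**(p̂)}) ≥ P_p({p̂ : p ∈ C*(p̂)}) ≥ 1−δ. -/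
open MeasureTheory Finset
open scoped ENNReal Classical

noncomputable section

/-- Rearrangement bound: a sum of an antitone sequence over an index set of size `m`
is at most the sum over the first `m` indices. -/
lemma sum_le_sum_range_of_anti {N : ℕ} {f : ℕ → ℝ}
    (hdec : ∀ i j : ℕ, i ≤ j → j < N → f j ≤ f i)
    (I : Finset ℕ) (hI : ∀ j ∈ I, j < N) :
    ∑ i ∈ I, f i ≤ ∑ i ∈ Finset.range I.card, f i := by
  induction I using Finset.strongInduction with
  | _ I ih =>
    rcases I.eq_empty_or_nonempty with h | h
    · simp [h]
    · have hI' : ∀ j ∈ I, j < N := hI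
      set M := I.max' h with hM
      have hMI : M ∈ I := I.max'_mem h
      have hMN : M < N := hI' M hMI
      have hsubr : I ⊆ Finset.range (M + 1) := fun j hj =>
        Finset.mem_range.mpr (Nat.lt_succ_of_le (I.le_max' j hj))
      have hcard : I.card - 1 ≤ M := by
        have h1 := Finset.card_le_card hsubr
        simp only [Finset.card_range] at h1
        omega
      have hcard1 : 1 ≤ I.card := Finset.card_pos.mpr h
      have herase : (I.erase M).card = I.card - 1 := Finset.card_erase_of_mem hMI
      have hrec := ih (I.erase M) (Finset.erase_ssubset hMI)
        (fun j hj => hI' j (Finset.mem_of_mem_erase hj))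
      have hsplit : ∑ i ∈ I, f i = ∑ i ∈ I.erase M, f i + f M :=
        (Finset.sum_erase_add I f hMI).symm
      have hfM : f M ≤ f (I.card - 1) := hdec _ _ hcard hMN
      have hrange : ∑ i ∈ Finset.range I.card, f i
          = ∑ i ∈ Finset.range (I.card - 1), f i + f (I.card - 1) := by
        conv_lhs => rw [show I.card = (I.card - 1) + 1 by omega]
        rw [Finset.sum_range_succ]
      rw [hsplit, hrange]
      exact add_le_add (herase ▸ hrec) hfM

/-- Maximal coverage among minimal-volume regions: for each `p`, let `p̂_1, p̂_2, …` be an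
ordering of `Δ_{k,n}` by decreasing probability under `p`, let `ℓ(p)` be the smallest integer
whose prefix sum reaches `1-δ`, let `S**(p)` consist of the first `ℓ(p)` elements, and let
`C**(p̂) = {p ∈ Δ_k : p̂ ∈ S**(p)}`.  If `C*` is any minimal-volume confidence region built from
covering collections `S*(p)` of minimum cardinality among sets of mass at least `1-δ`, then
`P_p(p ∈ C**(p̂)) ≥ P_p(p ∈ C*(p̂)) ≥ 1-δ` for all `p ∈ Δ_k`. -/
theorem maximal_coverage_among_minimal_volume (k n : ℕ) (hk : 2 ≤ k) (hn : 1 ≤ n)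
    (δ : ℝ) (hδ0 : 0 < δ) (hδ1 : δ < 1)
    -- for each `p`, an enumeration `e p 0, e p 1, …` of `Δ_{k,n}` by decreasing probability
    (e : EuclideanSpace ℝ (Fin k) → ℕ → (Fin k → ℕ))
    (hbij : ∀ p ∈ probSimplex k,
      ∀ c ∈ discSimplex k n, ∃! i : ℕ, i < (discSimplex k n).card ∧ e p i = c)
    (hmem : ∀ p ∈ probSimplex k, ∀ i < (discSimplex k n).card, e p i ∈ discSimplex k n)
    (hdec : ∀ p ∈ probSimplex k, ∀ i j : ℕ, i ≤ j → j < (discSimplex k n).card →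
      multProb k p (e p j) ≤ multProb k p (e p i))
    -- `ℓ p` is the smallest integer whose prefix sum reaches `1-δ`
    (ℓ : EuclideanSpace ℝ (Fin k) → ℕ)
    (hℓle : ∀ p ∈ probSimplex k, ℓ p ≤ (discSimplex k n).card)
    (hℓsum : ∀ p ∈ probSimplex k, 1 - δ ≤ ∑ i ∈ Finset.range (ℓ p), multProb k p (e p i))
    (hℓmin : ∀ p ∈ probSimplex k, ∀ m < ℓ p,
      ∑ i ∈ Finset.range m, multProb k p (e p i) < 1 - δ)
    -- `S**(p)` consists of the `ℓ p` most probable empirical distributions, `C**` its inversion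
    (Sdstar : EuclideanSpace ℝ (Fin k) → Finset (Fin k → ℕ))
    (hSdstar : ∀ p, Sdstar p = (Finset.range (ℓ p)).image (e p))
    (Cdstar : (Fin k → ℕ) → Set (EuclideanSpace ℝ (Fin k)))
    (hCdstar : ∀ c, Cdstar c = {p : EuclideanSpace ℝ (Fin k) | p ∈ probSimplex k ∧ c ∈ Sdstar p})
    -- an arbitrary minimal-volume confidence region `C*` built from covering collections `S*`
    (Sstar : EuclideanSpace ℝ (Fin k) → Finset (Fin k → ℕ))
    (hSsub : ∀ p ∈ probSimplex k, Sstar p ⊆ discSimplex k n)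
    (hSmass : ∀ p ∈ probSimplex k, 1 - δ ≤ Pmass k p (Sstar p))
    (hSmin : ∀ p ∈ probSimplex k, ∀ T ⊆ discSimplex k n,
      1 - δ ≤ Pmass k p T → (Sstar p).card ≤ T.card)
    (Cstar : (Fin k → ℕ) → Set (EuclideanSpace ℝ (Fin k)))
    (hCstar : ∀ c, Cstar c = {p : EuclideanSpace ℝ (Fin k) | p ∈ probSimplex k ∧ c ∈ Sstar p}) :
    ∀ p ∈ probSimplex k,
      Pmass k p ((discSimplex k n).filter fun c => p ∈ Cstar c)
          ≤ Pmass k p ((discSimplex k n).filter fun c => p ∈ Cdstar c)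
      ∧ 1 - δ ≤ Pmass k p ((discSimplex k n).filter fun c => p ∈ Cstar c) := by
  intro p hp
  have hf0 : ∀ c, 0 ≤ multProb k p c := by
    intro c
    have h1 := hp.1
    unfold multProb
    have : 0 ≤ ∏ i, p i ^ c i := Finset.prod_nonneg fun i _ => pow_nonneg (h1 i) _
    positivity
  set N := (discSimplex k n).card with hN
  have hinj : ∀ i j, i < N → j < N → e p i = e p j → i = j := by
    intro i j hi hj hij
    obtain ⟨m, _, hm⟩ := hbij p hp (e p j) (hmem p hp j hj)
    exact (hm i ⟨hi, hij⟩).trans (hm j ⟨hj, rfl⟩).symm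
  have hSd_sub : Sdstar p ⊆ discSimplex k n := by
    rw [hSdstar]
    intro c hc
    simp only [Finset.mem_image, Finset.mem_range] at hc
    obtain ⟨i, hi, rfl⟩ := hc
    exact hmem p hp i (lt_of_lt_of_le hi (hℓle p hp))
  have hinjOnℓ : ∀ i ∈ Finset.range (ℓ p), ∀ j ∈ Finset.range (ℓ p),
      e p i = e p j → i = j := by
    intro i hi j hj hij
    exact hinj i j (lt_of_lt_of_le (Finset.mem_range.mp hi) (hℓle p hp))
      (lt_of_lt_of_le (Finset.mem_range.mp hj) (hℓle p hp)) hij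
  have hSd_mass : Pmass k p (Sdstar p) = ∑ i ∈ Finset.range (ℓ p), multProb k p (e p i) := by
    rw [hSdstar, Pmass, Finset.sum_image hinjOnℓ]
  have hSd_card : (Sdstar p).card = ℓ p := by
    rw [hSdstar, Finset.card_image_of_injOn hinjOnℓ, Finset.card_range]
  have hfilt_star : (discSimplex k n).filter (fun c => p ∈ Cstar c) = Sstar p := by
    ext c
    simp only [Finset.mem_filter, hCstar, Set.mem_setOf_eq]
    exact ⟨fun h => h.2.2, fun h => ⟨hSsub p hp h, hp, h⟩⟩
  have hfilt_dstar : (discSimplex k n).filter (fun c => p ∈ Cdstar c) = Sdstar p := by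
    ext c
    simp only [Finset.mem_filter, hCdstar, Set.mem_setOf_eq]
    exact ⟨fun h => h.2.2, fun h => ⟨hSd_sub h, hp, h⟩⟩
  rw [hfilt_star, hfilt_dstar]
  refine ⟨?_, hSmass p hp⟩
  have hcardle : (Sstar p).card ≤ ℓ p := by
    have := hSmin p hp (Sdstar p) hSd_sub (by rw [hSd_mass]; exact hℓsum p hp)
    omega
  set I := (Finset.range N).filter (fun i => e p i ∈ Sstar p) with hIdef
  have hIlt : ∀ j ∈ I, j < N := fun j hj =>
    Finset.mem_range.mp (Finset.mem_filter.mp hj).1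
  have hIinjOn : ∀ i ∈ I, ∀ j ∈ I, e p i = e p j → i = j := fun i hi j hj =>
    hinj i j (hIlt i hi) (hIlt j hj)
  have hIim : I.image (e p) = Sstar p := by
    ext c
    simp only [Finset.mem_image, hIdef, Finset.mem_filter, Finset.mem_range]
    constructor
    · rintro ⟨i, ⟨_, h⟩, rfl⟩; exact h
    · intro hc
      obtain ⟨i, ⟨hi, hei⟩, _⟩ := hbij p hp c (hSsub p hp hc)
      exact ⟨i, ⟨hi, hei ▸ hc⟩, hei⟩
  have hIcard : I.card = (Sstar p).card := by
    rw [← hIim, Finset.card_image_of_injOn hIinjOn]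
  have h1 : Pmass k p (Sstar p) = ∑ i ∈ I, multProb k p (e p i) := by
    rw [← hIim, Pmass, Finset.sum_image hIinjOn]
  have h2 : ∑ i ∈ I, multProb k p (e p i)
      ≤ ∑ i ∈ Finset.range I.card, multProb k p (e p i) :=
    sum_le_sum_range_of_anti (fun i j hij hjN => hdec p hp i j hij hjN) I hIlt
  have h3 : ∑ i ∈ Finset.range I.card, multProb k p (e p i)
      ≤ ∑ i ∈ Finset.range (ℓ p), multProb k p (e p i) :=
    Finset.sum_le_sum_of_subset_of_nonneg
      (Finset.range_subset_range.mpr (by omega)) (fun i _ _ => hf0 _)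
  calc Pmass k p (Sstar p) = ∑ i ∈ I, multProb k p (e p i) := h1
    _ ≤ ∑ i ∈ Finset.range I.card, multProb k p (e p i) := h2
    _ ≤ ∑ i ∈ Finset.range (ℓ p), multProb k p (e p i) := h3
    _ = Pmass k p (Sdstar p) := hSd_mass.symm
end
end
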